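/- arXiv:1710.06492 — 2 statements merged into one kernel-verified Lean document; each statement's English description precedes it below -/
import Mathlib

section
/- Let Y ⊆ ℝ be a set such that (a) no point of Y is an accumulation point of Y, and (b) every accumulation point p of Y satisfies: p is an accumulation point of Y ∩ (−∞, p) and an accumulation point of Y ∩ (p, +∞). Then every y ∈ Y that is not the greatest element of Y has an immediate successor in Y, i.e., there exists z ∈ Y with z > y and no element of Y strictly between y and z. -/
open Filter Set

/- The candidate successor of `y` is `z = inf (Y ∩ (y, ∞))`. If `z` is not attained it is an
accumulation point of `Y`, distinct from `y` because `y` is isolated; being a left accumulation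
point, it has points of `Y` in `(y, z)`, which contradicts `z` being the infimum. -/

theorem accPt_csInf_of_csInf_notMem {α : Type*} [ConditionallyCompleteLinearOrder α]
    [TopologicalSpace α] [OrderTopology α] {s : Set α} (hne : s.Nonempty) (hbdd : BddBelow s)
    (hs : sInf s ∉ s) : AccPt (sInf s) (𝓟 s) := by
  rw [accPt_principal_iff_clusterPt, sdiff_singleton_eq_self hs, ← mem_closure_iff_clusterPt]
  exact csInf_mem_closure hne hbdd

theorem AccPt.inter_Ioo_nonempty_of_lt {α : Type*} [LinearOrder α] [TopologicalSpace α]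
    [OrderClosedTopology α] {s : Set α} {a p : α} (hp : AccPt p (𝓟 (s ∩ Iio p))) (hap : a < p) :
    (s ∩ Ioo a p).Nonempty := by
  obtain ⟨w, ⟨haw, hws, hwp⟩, -⟩ := accPt_iff_nhds.mp hp (Ioi a) (Ioi_mem_nhds hap)
  exact ⟨w, hws, haw, hwp⟩

/-- Let `Y ⊆ ℝ` be a set none of whose points is an accumulation point of `Y`,
and such that every accumulation point of `Y` is both a left and a right
accumulation point.  Then every element of `Y` which is not greatest in `Y`
has an immediate successor in `Y`. -/
theorem exists_immediate_successor_of_two_sided_acc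
    (Y : Set ℝ)
    (ha : ∀ y ∈ Y, ¬ AccPt y (𝓟 Y))
    (hb : ∀ p : ℝ, AccPt p (𝓟 Y) →
      AccPt p (𝓟 (Y ∩ Set.Iio p)) ∧ AccPt p (𝓟 (Y ∩ Set.Ioi p))) :
    ∀ y ∈ Y, (∃ x ∈ Y, y < x) →
      ∃ z ∈ Y, y < z ∧ ∀ w ∈ Y, ¬ (y < w ∧ w < z) := by
  rintro y hy ⟨x, hx, hyx⟩
  set S := Y ∩ Ioi y
  have hne : S.Nonempty := ⟨x, hx, hyx⟩
  have hbdd : BddBelow S := ⟨y, fun _ hs ↦ le_of_lt hs.2⟩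
  have hinf_le : ∀ w ∈ Y, y < w → sInf S ≤ w := fun w hw hyw ↦ csInf_le hbdd ⟨hw, hyw⟩
  by_cases hmem : sInf S ∈ S
  · exact ⟨sInf S, hmem.1, hmem.2, fun w hw ⟨hyw, hwz⟩ ↦ (hinf_le w hw hyw).not_gt hwz⟩
  have hacc : AccPt (sInf S) (𝓟 Y) :=
    (accPt_csInf_of_csInf_notMem hne hbdd hmem).mono (principal_mono.mpr inter_subset_left)
  have hyz : y < sInf S :=
    (le_csInf hne fun _ hs ↦ le_of_lt hs.2).lt_of_ne fun h ↦ ha y hy (h ▸ hacc)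
  obtain ⟨w, hw, hyw, hwz⟩ := (hb _ hacc).1.inter_Ioo_nonempty_of_lt hyz
  exact absurd (hinf_le w hw hyw) hwz.not_ge
end

section
/- Every countable linear order Y in which every non-greatest element has an immediate successor and every non-least element has an immediate predecessor admits an order embedding φ : Y → (0,1) ⊆ ℝ such that no point of φ(Y) is an accumulation point of φ(Y). -/
/-!
Since `Y` is countable, it embeds into the dense order `(0, 1)`. For any order embedding `φ`
into an order topology, if `y` has an immediate successor `z` (or is the greatest element) and an
immediate predecessor `w` (or is the least element), then the neighbourhood `(φ w, φ z)` of `φ y`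
meets `range φ` only in `φ y`, so `φ y` is isolated in the range.
-/

open Filter Topology

namespace OrderEmbedding

variable {Y α : Type*} [LinearOrder Y] [LinearOrder α] [TopologicalSpace α] [OrderTopology α]

theorem eventually_le_of_covBy (φ : Y ↪o α) {y : Y} (hsucc : ¬IsMax y → ∃ z, y ⋖ z) :
    ∀ᶠ x in 𝓝 (φ y), ∀ u, φ u = x → u ≤ y := by
  by_cases hmax : IsMax y
  · exact Eventually.of_forall fun _ u _ => hmax.isTop u
  obtain ⟨z, hz⟩ := hsucc hmax
  filter_upwards [Iio_mem_nhds (φ.strictMono hz.lt)] with x hx u rfl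
  exact hz.le_of_lt (φ.lt_iff_lt.mp hx)

theorem eventually_ge_of_covBy (φ : Y ↪o α) {y : Y} (hpred : ¬IsMin y → ∃ w, w ⋖ y) :
    ∀ᶠ x in 𝓝 (φ y), ∀ u, φ u = x → y ≤ u := by
  by_cases hmin : IsMin y
  · exact Eventually.of_forall fun _ u _ => hmin.isBot u
  obtain ⟨w, hw⟩ := hpred hmin
  filter_upwards [Ioi_mem_nhds (φ.strictMono hw.lt)] with x hx u rfl
  exact hw.ge_of_gt (φ.lt_iff_lt.mp hx)

theorem not_accPt_range_of_covBy (φ : Y ↪o α) {y : Y} (hsucc : ¬IsMax y → ∃ z, y ⋖ z)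
    (hpred : ¬IsMin y → ∃ w, w ⋖ y) : ¬AccPt (φ y) (𝓟 (Set.range φ)) := by
  rw [accPt_iff_frequently, not_frequently]
  filter_upwards [φ.eventually_le_of_covBy hsucc, φ.eventually_ge_of_covBy hpred]
    with x hle hge ⟨hne, u, hu⟩
  exact hne (hu ▸ congrArg φ (le_antisymm (hle u hu) (hge u hu)))

end OrderEmbedding

/-- Every countable sequential linear order admits an order embedding into the
open interval `(0,1) ⊆ ℝ` whose image has no point which is an accumulation
point of the image. -/
theorem exists_discrete_orderEmbedding_into_unitInterval
    {Y : Type*} [LinearOrder Y] [Countable Y]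
    (hsucc : ∀ y : Y, ¬ IsMax y → ∃ z, y ⋖ z)
    (hpred : ∀ y : Y, ¬ IsMin y → ∃ z, z ⋖ y) :
    ∃ φ : Y ↪o ℝ, (∀ y : Y, φ y ∈ Set.Ioo (0 : ℝ) 1) ∧
      ∀ y : Y, ¬ AccPt (φ y) (𝓟 (Set.range φ)) := by
  have : Infinite (Set.Ioo (0 : ℝ) 1) := (Set.Ioo_infinite zero_lt_one).to_subtype
  obtain ⟨f⟩ : Nonempty (Y ↪o Set.Ioo (0 : ℝ) 1) := Order.embedding_from_countable_to_dense _ _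
  exact ⟨f.trans (OrderEmbedding.subtype _), fun y => (f y).2,
    fun y => OrderEmbedding.not_accPt_range_of_covBy _ (hsucc y) (hpred y)⟩
end
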